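/- Let C be an 11-cycle in a graph G with no 5-cycles, no 7-cycles, and no adjacent triangles, such that some edge of C lies in a triangle with apex inside. If a vertex y not on C and distinct from the apex has three neighbors z_1, z_2, z_3 on C, then C together with the edges yz_1, yz_2, yz_3 contains a 9-cycle separating the apex from the outside. -/

import Mathlib

open SimpleGraph

/-- `G` contains a cycle of length `n`. -/
def SimpleGraph.HasCycleLength {V : Type*} (G : SimpleGraph V) (n : ℕ) : Prop :=
  ∃ (v : V) (c : G.Walk v v), c.IsCycle ∧ c.length = n

/-- No two triangles of `G` share an edge: two triangles on a common edge `uv`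
must have the same apex. -/
def SimpleGraph.NoAdjacentTriangles {V : Type*} (G : SimpleGraph V) : Prop :=
  ∀ u v x y : V, G.Adj u v → G.Adj u x → G.Adj v x → G.Adj u y → G.Adj v y → x = y

/-- The consecutive pairs of a list, read cyclically. -/
def cyclicPairs {V : Type*} (l : List V) : List (V × V) := l.zip (l.rotate 1)

/-- A (combinatorial) plane graph: a finite connected simple graph together with a
finite set of faces, each face being given by its boundary closed walk, such that
every edge lies on exactly two face-incidences and Euler's formula holds. -/
structure PlaneGraph where
  V : Type
  [decV : DecidableEq V]
  [fintV : Fintype V]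
  G : SimpleGraph V
  F : Type
  [fintF : Fintype F]
  /-- the unbounded (outer) face -/
  outer : F
  /-- the closed boundary walk of each face, as a cyclic list of vertices -/
  boundary : F → List V
  boundary_adj : ∀ f, ∀ p ∈ cyclicPairs (boundary f), G.Adj p.1 p.2
  edge_faces : ∀ e ∈ G.edgeSet,
    (∑ f : F, ((cyclicPairs (boundary f)).map (fun p => s(p.1, p.2))).count e) = 2
  connected : G.Connected
  euler : (Fintype.card V : ℤ) - (G.edgeSet.ncard : ℤ) + (Fintype.card F : ℤ) = 2

attribute [instance] PlaneGraph.decV PlaneGraph.fintV PlaneGraph.fintF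

/-- `|V(G)| + |E(G)|`. -/
noncomputable def PlaneGraph.size (P : PlaneGraph) : ℕ := Nat.card P.V + P.G.edgeSet.ncard

/-- The degree of a face: the length of its boundary walk. -/
def PlaneGraph.faceDegree (P : PlaneGraph) (f : P.F) : ℕ := (P.boundary f).length

/-- The (multi)set of edges on the boundary of a face. -/
def PlaneGraph.faceEdges (P : PlaneGraph) (f : P.F) : List (Sym2 P.V) :=
  (cyclicPairs (P.boundary f)).map (fun p => s(p.1, p.2))

/-- The class 𝓖: no 5-cycles, no 7-cycles, no adjacent triangles. -/
def PlaneGraph.Good (P : PlaneGraph) : Prop :=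
  ¬ P.G.HasCycleLength 5 ∧ ¬ P.G.HasCycleLength 7 ∧ P.G.NoAdjacentTriangles

/-- A map `φ` is a proper 3-coloring of (the boundary of) the face `f`. -/
def PlaneGraph.ProperOn (P : PlaneGraph) (φ : P.V → Fin 3) (f : P.F) : Prop :=
  ∀ p ∈ cyclicPairs (P.boundary f), φ p.1 ≠ φ p.2

/-- The precoloring `φ` of the face `f` extends to a proper 3-coloring of the
whole graph. -/
def PlaneGraph.Extends (P : PlaneGraph) (φ : P.V → Fin 3) (f : P.F) : Prop :=
  ∃ ψ : P.V → Fin 3, (∀ a b, P.G.Adj a b → ψ a ≠ ψ b) ∧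
    ∀ v ∈ P.boundary f, ψ v = φ v

/-- A special 11-face: its boundary is an 11-cycle, it is adjacent to a triangle
sharing one edge with it, no vertex off the boundary has three or more neighbors
on it (no claw-center), and no adjacent pair of vertices off the boundary has
four or more neighbors on it in total (no d-claw-center). -/
def PlaneGraph.SpecialFace (P : PlaneGraph) (f : P.F) : Prop :=
  (P.boundary f).Nodup ∧ (P.boundary f).length = 11 ∧
  (∃ x u v, x ∉ P.boundary f ∧ s(u, v) ∈ P.faceEdges f ∧
    P.G.Adj x u ∧ P.G.Adj x v) ∧
  (∀ x, x ∉ P.boundary f → {v | v ∈ P.boundary f ∧ P.G.Adj x v}.ncard ≤ 2) ∧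
  (∀ x y, x ∉ P.boundary f → y ∉ P.boundary f → P.G.Adj x y →
    {v | v ∈ P.boundary f ∧ P.G.Adj x v}.ncard +
      {v | v ∈ P.boundary f ∧ P.G.Adj y v}.ncard ≤ 3)

/-- A face of the kind considered in the main theorem: a 3-face or a 9-face
bounded by a cycle, or a special 11-face. -/
def PlaneGraph.AllowedFace (P : PlaneGraph) (f : P.F) : Prop :=
  ((P.boundary f).Nodup ∧ ((P.boundary f).length = 3 ∨ (P.boundary f).length = 9))
    ∨ P.SpecialFace f

/-- `(P, f, φ)` is a counterexample to the extension theorem. -/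
def PlaneGraph.Counterexample (P : PlaneGraph) (f : P.F) (φ : P.V → Fin 3) : Prop :=
  P.Good ∧ (P.G.HasCycleLength 4 ∨ P.G.HasCycleLength 6) ∧ P.AllowedFace f ∧
    P.ProperOn φ f ∧ ¬ P.Extends φ f

/-- A counterexample minimizing `|V| + |E|`. -/
def PlaneGraph.MinimalCounterexample (P : PlaneGraph) (f : P.F) (φ : P.V → Fin 3) :
    Prop :=
  P.Counterexample f φ ∧
    ∀ (Q : PlaneGraph) (g : Q.F) (ψ : Q.V → Fin 3),
      Q.Counterexample g ψ → P.size ≤ Q.size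

/-- The boundary cycle of `f` has no chord: any edge between boundary vertices
is a boundary edge. -/
def PlaneGraph.Chordless (P : PlaneGraph) (f : P.F) : Prop :=
  ∀ u v, u ∈ P.boundary f → v ∈ P.boundary f → P.G.Adj u v →
    s(u, v) ∈ P.faceEdges f

/-- 2-connectedness. -/
def SimpleGraph.TwoConnected {V : Type*} (G : SimpleGraph V) : Prop :=
  3 ≤ Nat.card V ∧ ∀ v : V, ((⊤ : G.Subgraph).deleteVerts {v}).coe.Connected

/-! The neighbours `z₁, z₂, z₃` of `y` cut the 11-cycle into three arcs. Closing an arc of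
length `ℓ` through `y` gives a cycle of length `ℓ + 2`, and closing the union of the other two
gives one of length `13 - ℓ`; with no 5- or 7-cycles no arc has length 3, 5, 6 or 8. Two
consecutive arcs of length 1 would be two triangles on a common edge `y zᵢ`, so the arc lengths
are 2, 2, 7. The edge `uv` is not on an arc `s m t` of length 2, for then the apex `x` would close
a 5-cycle `y s x m t` (or `y t x m s`); hence it is on the arc of length 7, which closes through
`y` to the 9-cycle. -/

namespace SimpleGraph

variable {V : Type*} {G : SimpleGraph V}

namespace Walk

lemma IsCycle.append_comm {u v : V} {p : G.Walk u v} {q : G.Walk v u}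
    (h : (p.append q).IsCycle) : (q.append p).IsCycle := by
  rw [isCycle_def, isTrail_def, edges_append, tail_support_append] at h ⊢
  obtain ⟨hedges, hne, hsupp⟩ := h
  refine ⟨List.perm_append_comm.nodup hedges, fun hnil => hne ?_, List.perm_append_comm.nodup hsupp⟩
  have hlen := congrArg length hnil
  rw [length_append, length_nil] at hlen
  exact eq_nil_iff_nil.mpr (length_eq_zero_iff.mp (by rw [length_append]; omega))

lemma IsPath.isCycle_cons_concat {s t y : V} {W : G.Walk s t} (hW : W.IsPath) (hst : s ≠ t)
    (hy : y ∉ W.support) (hys : G.Adj y s) (hty : G.Adj t y) :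
    (cons hys (W.concat hty)).IsCycle := by
  refine (cons_isCycle_iff _ _).mpr ⟨hW.concat hy hty, fun h => ?_⟩
  rw [edges_concat, List.concat_eq_append, List.mem_append, List.mem_singleton] at h
  rcases h with h | h
  · exact hy (W.fst_mem_support_of_mem_edges h)
  · rcases Sym2.eq_iff.mp h with ⟨rfl, -⟩ | ⟨-, rfl⟩
    · exact hy W.end_mem_support
    · exact hst rfl

lemma IsPath.hasCycleLength_length_add_two {s t y : V} {W : G.Walk s t} (hW : W.IsPath)
    (hst : s ≠ t) (hy : y ∉ W.support) (hys : G.Adj y s) (hyt : G.Adj y t) :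
    G.HasCycleLength (W.length + 2) :=
  ⟨y, _, hW.isCycle_cons_concat hst hy hys hyt.symm, by simp⟩

end Walk

lemma hasCycleLength_five_of_nodup {y a x m b : V} (hnd : [y, a, x, m, b].Nodup)
    (hya : G.Adj y a) (hax : G.Adj a x) (hxm : G.Adj x m) (hmb : G.Adj m b) (hyb : G.Adj y b) :
    G.HasCycleLength 5 := by
  have hpath : (Walk.cons hax (Walk.cons hxm (Walk.cons hmb Walk.nil))).IsPath := by
    rw [Walk.isPath_def]
    simp only [Walk.support_cons, Walk.support_nil]
    exact hnd.sublist (List.sublist_cons_self _ _)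
  refine hpath.hasCycleLength_length_add_two (fun hab => ?_) ?_ hya hyb
  · subst hab; simp at hnd
  · simpa using (List.nodup_cons.mp hnd).1

namespace Walk

lemma exists_eq_cons_cons_nil_of_length_eq_two {s t : V} {W : G.Walk s t} (h2 : W.length = 2) :
    ∃ (m : V) (hsm : G.Adj s m) (hmt : G.Adj m t), W = cons hsm (cons hmt nil) := by
  rcases W with _ | ⟨hsm, _ | ⟨hmt, _ | ⟨_, _⟩⟩⟩ <;>
    simp only [length_cons, length_nil] at h2 <;> try omega
  exact ⟨_, hsm, hmt, rfl⟩

lemma IsPath.hasCycleLength_five_of_length_eq_two {s t u v x y : V} {W : G.Walk s t}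
    (hW : W.IsPath) (h2 : W.length = 2) (huv : s(u, v) ∈ W.edges)
    (hxu : G.Adj x u) (hxv : G.Adj x v) (hx : x ∉ W.support) (hy : y ∉ W.support) (hxy : x ≠ y)
    (hys : G.Adj y s) (hyt : G.Adj y t) : G.HasCycleLength 5 := by
  obtain ⟨m, hsm, hmt, rfl⟩ := exists_eq_cons_cons_nil_of_length_eq_two h2
  have hx_adj : ∀ w ∈ s(u, v), G.Adj x w := by simp [hxu, hxv]
  have hnd := hW.support_nodup
  simp only [support_cons, support_nil, List.mem_cons, List.not_mem_nil, or_false, not_or,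
    List.nodup_cons] at hx hy hnd
  simp only [edges_cons, edges_nil, List.mem_cons, List.not_mem_nil, or_false] at huv
  rcases huv with huv | huv <;> rw [huv] at hx_adj
  · exact hasCycleLength_five_of_nodup
      (by simp only [List.nodup_cons, List.mem_cons, List.not_mem_nil]; grind) hys
      (hx_adj _ (Sym2.mem_mk_left _ _)).symm (hx_adj _ (Sym2.mem_mk_right _ _)) hmt hyt
  · exact hasCycleLength_five_of_nodup
      (by simp only [List.nodup_cons, List.mem_cons, List.not_mem_nil]; grind) hyt
      (hx_adj _ (Sym2.mem_mk_right _ _)).symm (hx_adj _ (Sym2.mem_mk_left _ _)) hsm.symm hys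

lemma IsPath.exists_isCycle_length_add_two {s t y : V} {W : G.Walk s t} (hW : W.IsPath)
    (hst : s ≠ t) (hy : y ∉ W.support) (hys : G.Adj y s) (hyt : G.Adj y t) :
    ∃ c' : G.Walk y y, c'.IsCycle ∧ c'.length = W.length + 2 ∧ W.edges ⊆ c'.edges ∧
      (∀ w ∈ c'.support, w = y ∨ w ∈ W.support) ∧
      ∀ e ∈ c'.edges, e ∈ W.edges ∨ e = s(y, s) ∨ e = s(y, t) := by
  refine ⟨cons hys (W.concat hyt.symm), hW.isCycle_cons_concat hst hy hys hyt.symm,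
    by simp, fun e he => by simp [he], fun w hw => ?_, fun e he => ?_⟩
  · simp only [support_cons, support_concat, List.mem_cons, List.mem_append] at hw
    tauto
  · simp only [edges_cons, edges_concat, List.concat_eq_append, List.mem_cons, List.mem_append,
      List.not_mem_nil, or_false] at he
    rcases he with rfl | he | rfl
    · exact .inr (.inl rfl)
    · exact .inl he
    · exact .inr (.inr Sym2.eq_swap)

lemma IsCycle.exists_arcs [DecidableEq V] {a z₁ z₂ z₃ : V} {c : G.Walk a a} (hc : c.IsCycle)
    (hz₁ : z₁ ∈ c.support) (hz₂ : z₂ ∈ c.support) (hz₃ : z₃ ∈ c.support) :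
    ∃ (A : G.Walk z₁ z₂) (B : G.Walk z₂ z₃) (C : G.Walk z₃ z₁),
      (A.append (B.append C)).IsCycle ∧ (A.append (B.append C)).edges.Perm c.edges ∧
      ∀ w, w ∈ (A.append (B.append C)).support ↔ w ∈ c.support := by
  obtain ⟨p, q, hpq⟩ := mem_support_iff_exists_append.mp
    ((c.mem_support_rotate_iff z₁ hz₁).mpr hz₂)
  have hcyc : (p.append q).IsCycle := hpq ▸ hc.rotate hz₁
  have hperm : (p.append q).edges.Perm c.edges := hpq ▸ (c.rotate_edges z₁ hz₁).perm
  have hsupp : ∀ w, w ∈ (p.append q).support ↔ w ∈ c.support :=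
    fun w => hpq ▸ c.mem_support_rotate_iff z₁ hz₁
  have hz₃' : z₃ ∈ p.support ∨ z₃ ∈ q.support := by
    rw [← mem_support_append_iff, hsupp]; exact hz₃
  rcases hz₃' with hz₃' | hz₃'
  · -- `z₃` lies between `z₁` and `z₂`: reverse the cycle to meet `z₁, z₂, z₃` in this order
    obtain ⟨p₁, p₂, rfl⟩ := mem_support_iff_exists_append.mp hz₃'
    have hrev : q.reverse.append (p₂.reverse.append p₁.reverse) =
        ((p₁.append p₂).append q).reverse := by
      simp only [reverse_append, append_assoc]
    refine ⟨q.reverse, p₂.reverse, p₁.reverse, ?_, ?_, fun w => ?_⟩ <;> rw [hrev]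
    · exact hcyc.reverse
    · rw [edges_reverse]; exact (List.reverse_perm _).trans hperm
    · rw [support_reverse, List.mem_reverse]; exact hsupp w
  · obtain ⟨q₁, q₂, rfl⟩ := mem_support_iff_exists_append.mp hz₃'
    exact ⟨p, q₁, q₂, hcyc, hperm, hsupp⟩

lemma IsCycle.isPath_arcs {z₁ z₂ z₃ : V} {A : G.Walk z₁ z₂} {B : G.Walk z₂ z₃} {C : G.Walk z₃ z₁}
    (hD : (A.append (B.append C)).IsCycle) (h12 : z₁ ≠ z₂) (h13 : z₁ ≠ z₃) (h23 : z₂ ≠ z₃) :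
    A.IsPath ∧ B.IsPath ∧ C.IsPath ∧
      (A.append B).IsPath ∧ (B.append C).IsPath ∧ (C.append A).IsPath := by
  have hD' : ((A.append B).append C).IsCycle := by rwa [← append_assoc]
  have hD'' : (B.append (C.append A)).IsCycle := by
    simpa only [← append_assoc] using hD.append_comm
  exact ⟨hD.isPath_of_append_left (not_nil_of_ne h12.symm),
    hD''.isPath_of_append_left (not_nil_of_ne h23.symm),
    hD'.isPath_of_append_right (not_nil_of_ne h13),
    hD'.isPath_of_append_left (not_nil_of_ne h13.symm),
    hD.isPath_of_append_right (not_nil_of_ne h12),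
    hD''.isPath_of_append_right (not_nil_of_ne h23)⟩

lemma IsCycle.length_arcs_eq_two_or_seven (h5 : ¬ G.HasCycleLength 5)
    (h7 : ¬ G.HasCycleLength 7) (hT : G.NoAdjacentTriangles) {z₁ z₂ z₃ y : V}
    {A : G.Walk z₁ z₂} {B : G.Walk z₂ z₃} {C : G.Walk z₃ z₁}
    (hD : (A.append (B.append C)).IsCycle) (h11 : (A.append (B.append C)).length = 11)
    (hy : y ∉ (A.append (B.append C)).support) (h12 : z₁ ≠ z₂) (h13 : z₁ ≠ z₃) (h23 : z₂ ≠ z₃)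
    (hyz₁ : G.Adj y z₁) (hyz₂ : G.Adj y z₂) (hyz₃ : G.Adj y z₃) :
    (A.length = 2 ∨ A.length = 7) ∧ (B.length = 2 ∨ B.length = 7) ∧
      (C.length = 2 ∨ C.length = 7) := by
  simp only [mem_support_append_iff, not_or] at hy
  obtain ⟨hA, hB, hC, hAB, hBC, hCA⟩ := hD.isPath_arcs h12 h13 h23
  have arc : ∀ {s t : V} (W : G.Walk s t), W.IsPath → s ≠ t → y ∉ W.support →
      G.Adj y s → G.Adj y t → W.length ≠ 3 ∧ W.length ≠ 5 := by
    intro s t W hW hst hyW hys hyt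
    have hcyc := hW.hasCycleLength_length_add_two hst hyW hys hyt
    exact ⟨fun h => h5 (by rwa [h] at hcyc), fun h => h7 (by rwa [h] at hcyc)⟩
  have hA35 := arc A hA h12 hy.1 hyz₁ hyz₂
  have hB35 := arc B hB h23 hy.2.1 hyz₂ hyz₃
  have hC35 := arc C hC h13.symm hy.2.2 hyz₃ hyz₁
  have hAB35 := arc (A.append B) hAB h13 (by simp [hy.1, hy.2.1]) hyz₁ hyz₃
  have hBC35 := arc (B.append C) hBC h12.symm (by simp [hy.2.1, hy.2.2]) hyz₂ hyz₁
  have hCA35 := arc (C.append A) hCA h23.symm (by simp [hy.1, hy.2.2]) hyz₃ hyz₂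
  have hAB1 : ¬ (A.length = 1 ∧ B.length = 1) := fun ⟨ha, hb⟩ =>
    h13 (hT y z₂ z₁ z₃ hyz₂ hyz₁ (adj_of_length_eq_one ha).symm hyz₃ (adj_of_length_eq_one hb))
  have hBC1 : ¬ (B.length = 1 ∧ C.length = 1) := fun ⟨hb, hc⟩ => h12.symm
    (hT y z₃ z₂ z₁ hyz₃ hyz₂ (adj_of_length_eq_one hb).symm hyz₁ (adj_of_length_eq_one hc))
  have hCA1 : ¬ (C.length = 1 ∧ A.length = 1) := fun ⟨hc, ha⟩ => h23.symm
    (hT y z₁ z₃ z₂ hyz₁ hyz₃ (adj_of_length_eq_one hc).symm hyz₂ (adj_of_length_eq_one ha))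
  have hA0 : A.length ≠ 0 := fun h => h12 (eq_of_length_eq_zero h)
  have hB0 : B.length ≠ 0 := fun h => h23 (eq_of_length_eq_zero h)
  have hC0 : C.length ≠ 0 := fun h => h13.symm (eq_of_length_eq_zero h)
  simp only [length_append] at h11 hAB35 hBC35 hCA35
  omega

lemma exists_nine_cycle_of_arcs (h5 : ¬ G.HasCycleLength 5) (h7 : ¬ G.HasCycleLength 7)
    (hT : G.NoAdjacentTriangles) {z₁ z₂ z₃ u v x y : V}
    {A : G.Walk z₁ z₂} {B : G.Walk z₂ z₃} {C : G.Walk z₃ z₁}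
    (hD : (A.append (B.append C)).IsCycle) (h11 : (A.append (B.append C)).length = 11)
    (huv : s(u, v) ∈ (A.append (B.append C)).edges) (hx : x ∉ (A.append (B.append C)).support)
    (hxu : G.Adj x u) (hxv : G.Adj x v) (hy : y ∉ (A.append (B.append C)).support)
    (hyx : y ≠ x) (h12 : z₁ ≠ z₂) (h13 : z₁ ≠ z₃) (h23 : z₂ ≠ z₃)
    (hyz₁ : G.Adj y z₁) (hyz₂ : G.Adj y z₂) (hyz₃ : G.Adj y z₃) :
    ∃ c' : G.Walk y y, c'.IsCycle ∧ c'.length = 9 ∧ s(u, v) ∈ c'.edges ∧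
      (∀ w ∈ c'.support, w = y ∨ w ∈ (A.append (B.append C)).support) ∧
      ∀ e ∈ c'.edges, e ∈ (A.append (B.append C)).edges ∨
        e = s(y, z₁) ∨ e = s(y, z₂) ∨ e = s(y, z₃) := by
  obtain ⟨hA27, hB27, hC27⟩ :=
    hD.length_arcs_eq_two_or_seven h5 h7 hT h11 hy h12 h13 h23 hyz₁ hyz₂ hyz₃
  obtain ⟨hA, hB, hC, -⟩ := hD.isPath_arcs h12 h13 h23
  simp only [mem_support_append_iff, not_or] at hx hy
  simp only [mem_support_append_iff, edges_append, List.mem_append] at huv ⊢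
  rcases huv with huv | huv | huv
  · have hA7 := hA27.resolve_left fun h2 => h5
      (hA.hasCycleLength_five_of_length_eq_two h2 huv hxu hxv hx.1 hy.1 hyx.symm hyz₁ hyz₂)
    obtain ⟨c', hc', hlen, hsub, hS, hE⟩ := hA.exists_isCycle_length_add_two h12 hy.1 hyz₁ hyz₂
    exact ⟨c', hc', by rw [hlen, hA7], hsub huv, fun w hw => (hS w hw).imp_right .inl,
      fun e he => (hE e he).imp .inl (Or.imp_right .inl)⟩
  · have hB7 := hB27.resolve_left fun h2 => h5
      (hB.hasCycleLength_five_of_length_eq_two h2 huv hxu hxv hx.2.1 hy.2.1 hyx.symm hyz₂ hyz₃)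
    obtain ⟨c', hc', hlen, hsub, hS, hE⟩ := hB.exists_isCycle_length_add_two h23 hy.2.1 hyz₂ hyz₃
    exact ⟨c', hc', by rw [hlen, hB7], hsub huv, fun w hw => (hS w hw).imp_right (.inr ∘ .inl),
      fun e he => (hE e he).imp (.inr ∘ .inl) .inr⟩
  · have hC7 := hC27.resolve_left fun h2 => h5
      (hC.hasCycleLength_five_of_length_eq_two h2 huv hxu hxv hx.2.2 hy.2.2 hyx.symm hyz₃ hyz₁)
    obtain ⟨c', hc', hlen, hsub, hS, hE⟩ :=
      hC.exists_isCycle_length_add_two h13.symm hy.2.2 hyz₃ hyz₁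
    exact ⟨c', hc', by rw [hlen, hC7], hsub huv, fun w hw => (hS w hw).imp_right (.inr ∘ .inr),
      fun e he => (hE e he).imp (.inr ∘ .inr) (Or.elim · (.inr ∘ .inr) .inl)⟩

end Walk

end SimpleGraph

/-- Let C be an 11-cycle in a plane graph with no 5-cycles, no
7-cycles and no adjacent triangles, some edge uv of which lies on a triangle uvx
with apex x inside (off C). If a vertex y off C, distinct from x, has three
neighbors z₁, z₂, z₃ on C, then C together with the edges yz₁, yz₂, yz₃
contains a 9-cycle separating the apex from the outside (a 9-cycle through y
whose other edges come from C and the edges yzᵢ, and which has the edge uv on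
its boundary, hence x in its interior). -/
theorem claw_on_11cycle_yields_separating_9cycle
    (P : PlaneGraph)
    (h5 : ¬ P.G.HasCycleLength 5) (h7 : ¬ P.G.HasCycleLength 7)
    (hT : P.G.NoAdjacentTriangles)
    {a : P.V} (c : P.G.Walk a a) (hc : c.IsCycle) (h11 : c.length = 11)
    {u v x : P.V} (huv : s(u, v) ∈ c.edges) (hx : x ∉ c.support)
    (hxu : P.G.Adj x u) (hxv : P.G.Adj x v)
    {y z₁ z₂ z₃ : P.V} (hy : y ∉ c.support) (hyx : y ≠ x)
    (hz₁ : z₁ ∈ c.support) (hz₂ : z₂ ∈ c.support) (hz₃ : z₃ ∈ c.support)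
    (h12 : z₁ ≠ z₂) (h13 : z₁ ≠ z₃) (h23 : z₂ ≠ z₃)
    (hyz₁ : P.G.Adj y z₁) (hyz₂ : P.G.Adj y z₂) (hyz₃ : P.G.Adj y z₃) :
    ∃ (b : P.V) (c' : P.G.Walk b b), c'.IsCycle ∧ c'.length = 9 ∧
      y ∈ c'.support ∧ s(u, v) ∈ c'.edges ∧
      (∀ w ∈ c'.support, w = y ∨ w ∈ c.support) ∧
      (∀ e ∈ c'.edges, e ∈ c.edges ∨ e = s(y, z₁) ∨
        e = s(y, z₂) ∨ e = s(y, z₃)) := by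
  obtain ⟨A, B, C, hD, hperm, hsupp⟩ := hc.exists_arcs hz₁ hz₂ hz₃
  have hD11 : (A.append (B.append C)).length = 11 := by
    rw [← Walk.length_edges, hperm.length_eq, Walk.length_edges, h11]
  obtain ⟨c', hc', h9, huv', hS, hE⟩ := Walk.exists_nine_cycle_of_arcs h5 h7 hT hD hD11
    (hperm.mem_iff.mpr huv) (mt (hsupp x).mp hx) hxu hxv (mt (hsupp y).mp hy) hyx
    h12 h13 h23 hyz₁ hyz₂ hyz₃
  exact ⟨y, c', hc', h9, c'.start_mem_support, huv',
    fun w hw => (hS w hw).imp_right (hsupp w).mp, fun e he => (hE e he).imp_left hperm.mem_iff.mp⟩
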